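/- arXiv:1105.3028 — 4 statements merged into one kernel-verified Lean document; each statement's English description precedes it below -/
import Mathlib

section
/- Let T be a triangulated category with coproducts whose tensor product preserves coproducts and distinguished triangles in each variable. For any two classes of objects E and F of T, the class of tensor products A ⊗ B with A in the localizing subcategory generated by E and B in the localizing subcategory generated by F is contained in the localizing subcategory generated by the tensor products E ⊗ F. -/
open CategoryTheory Limits Pretriangulated MonoidalCategory

variable {T : Type*} [Category T] [Preadditive T] [HasZeroObject T] [HasShift T ℤ]
  [∀ n : ℤ, (shiftFunctor T n).Additive] [Pretriangulated T] [HasCoproducts.{0} T]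

/-- A class of objects of a triangulated category with coproducts is *localizing* if it
is closed under isomorphisms, shifts in both directions, cones of distinguished
triangles, and (the available, here: countable/small) coproducts. -/
def IsLocalizing (P : T → Prop) : Prop :=
  (∀ {X Y : T}, (X ≅ Y) → P X → P Y) ∧
  (∀ X : T, P X → P (X⟦(1 : ℤ)⟧)) ∧
  (∀ X : T, P (X⟦(1 : ℤ)⟧) → P X) ∧
  (∀ Tr ∈ distinguishedTriangles (C := T), P Tr.obj₁ → P Tr.obj₂ → P Tr.obj₃) ∧
  (∀ (ι : Type) (f : ι → T), (∀ i, P (f i)) → P (∐ f))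

/-- `genLoc S` is the localizing subcategory `⟨S⟩_loc` generated by a class `S`:
an object lies in it iff it lies in every localizing class containing `S`. -/
def genLoc (S : Set T) : T → Prop :=
  fun X => ∀ P : T → Prop, IsLocalizing P → (∀ Y ∈ S, P Y) → P X


lemma genLoc_isLocalizing (S : Set T) : IsLocalizing (genLoc S) :=
  ⟨fun h hX P hP hS => hP.1 h (hX P hP hS),
    fun X hX P hP hS => hP.2.1 X (hX P hP hS),
    fun X hX P hP hS => hP.2.2.1 X (hX P hP hS),
    fun Tr hTr h1 h2 P hP hS => hP.2.2.2.1 Tr hTr (h1 P hP hS) (h2 P hP hS),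
    fun ι f hf P hP hS => hP.2.2.2.2 ι f (fun i => hf i P hP hS)⟩

lemma genLoc_mem (S : Set T) {X : T} (hX : X ∈ S) : genLoc S X :=
  fun _ _ hS => hS X hX

/-- Let `T` be a triangulated category with coproducts, equipped with a
symmetric tensor product which preserves coproducts and distinguished triangles in each
variable (hypotheses `hshiftl`–`hcoprodr`).  Then for any two classes of objects
`E, F ⊆ T` we have `⟨E⟩_loc ⊗ ⟨F⟩_loc ⊆ ⟨E ⊗ F⟩_loc`. -/
theorem stmt2 [MonoidalCategory T] [SymmetricCategory T] (E F : Set T)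
    (hshiftl : ∀ A B : T, Nonempty ((A ⊗ B⟦(1 : ℤ)⟧) ≅ (A ⊗ B)⟦(1 : ℤ)⟧))
    (hshiftr : ∀ A B : T, Nonempty ((A⟦(1 : ℤ)⟧ ⊗ B) ≅ (A ⊗ B)⟦(1 : ℤ)⟧))
    (htril : ∀ (A : T), ∀ Tr ∈ distinguishedTriangles (C := T),
      ∃ h : A ⊗ Tr.obj₃ ⟶ (A ⊗ Tr.obj₁)⟦(1 : ℤ)⟧,
        Triangle.mk (A ◁ Tr.mor₁) (A ◁ Tr.mor₂) h ∈ distinguishedTriangles (C := T))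
    (htrir : ∀ (B : T), ∀ Tr ∈ distinguishedTriangles (C := T),
      ∃ h : Tr.obj₃ ⊗ B ⟶ (Tr.obj₁ ⊗ B)⟦(1 : ℤ)⟧,
        Triangle.mk (Tr.mor₁ ▷ B) (Tr.mor₂ ▷ B) h ∈ distinguishedTriangles (C := T))
    (hcoprodl : ∀ (A : T) (ι : Type) (f : ι → T),
      Nonempty ((A ⊗ ∐ f) ≅ ∐ fun i => A ⊗ f i))
    (hcoprodr : ∀ (B : T) (ι : Type) (f : ι → T),
      Nonempty (((∐ f) ⊗ B) ≅ ∐ fun i => f i ⊗ B)) :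
    ∀ A B : T, genLoc E A → genLoc F B →
      genLoc {X : T | ∃ e ∈ E, ∃ f ∈ F, X = e ⊗ f} (A ⊗ B) := by
  set S : Set T := {X : T | ∃ e ∈ E, ∃ f ∈ F, X = e ⊗ f} with hS
  obtain ⟨Giso, Gsh, Gunsh, Gtri, Gcop⟩ := genLoc_isLocalizing S
  have key : ∀ e ∈ E, ∀ B : T, genLoc F B → genLoc S (e ⊗ B) := by
    intro e he B hB
    refine hB (fun X => genLoc S (e ⊗ X)) ⟨?_, ?_, ?_, ?_, ?_⟩ ?_
    · intro X Y i h
      exact Giso (whiskerLeftIso e i) h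
    · intro X h
      exact Giso (hshiftl e X).some.symm (Gsh _ h)
    · intro X h
      exact Gunsh _ (Giso (hshiftl e X).some h)
    · intro Tr hTr h1 h2
      obtain ⟨h, hdist⟩ := htril e Tr hTr
      exact Gtri _ hdist h1 h2
    · intro ι f hf
      exact Giso (hcoprodl e ι f).some.symm (Gcop ι _ hf)
    · intro Y hY
      exact genLoc_mem S ⟨e, he, Y, hY, rfl⟩
  intro A B hA hB
  refine hA (fun X => genLoc S (X ⊗ B)) ⟨?_, ?_, ?_, ?_, ?_⟩ ?_
  · intro X Y i h
    exact Giso (whiskerRightIso i B) h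
  · intro X h
    exact Giso (hshiftr X B).some.symm (Gsh _ h)
  · intro X h
    exact Gunsh _ (Giso (hshiftr X B).some h)
  · intro Tr hTr h1 h2
    obtain ⟨h, hdist⟩ := htrir B Tr hTr
    exact Gtri _ hdist h1 h2
  · intro ι f hf
    exact Giso (hcoprodr B ι f).some.symm (Gcop ι _ hf)
  · intro e he
    exact key e he B hB
end

section
/- Let G be a finite group and M a Mackey module over the representation Green functor R^G. If M[C] ⊗_ℤ ℚ = 0 for all cyclic subgroups C ≤ G, then M[G] ⊗_ℤ ℚ = 0. -/
universe u

/-- A (commutative) Green functor for `G`, in the subgroup picture (the fields record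
the structure used here: restriction ring homomorphisms, additive induction maps,
transitivity, and the Frobenius relations). -/
structure GreenFunctor (G : Type u) [Group G] where
  obj : Subgroup G → Type u
  ring : ∀ H, CommRing (obj H)
  res : ∀ {L H : Subgroup G}, L ≤ H → obj H →+* obj L
  ind : ∀ {L H : Subgroup G}, L ≤ H → obj L →+ obj H
  res_refl : ∀ (H : Subgroup G) (x : obj H), res le_rfl x = x
  res_trans : ∀ {K L H : Subgroup G} (h1 : K ≤ L) (h2 : L ≤ H) (x : obj H),
    res h1 (res h2 x) = res (h1.trans h2) x
  ind_refl : ∀ (H : Subgroup G) (x : obj H), ind le_rfl x = x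
  ind_trans : ∀ {K L H : Subgroup G} (h1 : K ≤ L) (h2 : L ≤ H) (x : obj K),
    ind h2 (ind h1 x) = ind (h1.trans h2) x
  frob : ∀ {L H : Subgroup G} (h : L ≤ H) (y : obj H) (x : obj L),
    ind h (res h y * x) = y * ind h x

attribute [instance] GreenFunctor.ring

/-- A Mackey module over a Green functor `R`, in the subgroup picture. -/
structure MackeyModule {G : Type u} [Group G] (R : GreenFunctor G) where
  obj : Subgroup G → Type u
  addgrp : ∀ H, AddCommGroup (obj H)
  mod : ∀ H, Module (R.obj H) (obj H)
  res : ∀ {L H : Subgroup G}, L ≤ H → obj H →+ obj L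
  ind : ∀ {L H : Subgroup G}, L ≤ H → obj L →+ obj H
  res_refl : ∀ (H : Subgroup G) (m : obj H), res le_rfl m = m
  res_trans : ∀ {K L H : Subgroup G} (h1 : K ≤ L) (h2 : L ≤ H) (m : obj H),
    res h1 (res h2 m) = res (h1.trans h2) m
  ind_refl : ∀ (H : Subgroup G) (m : obj H), ind le_rfl m = m
  ind_trans : ∀ {K L H : Subgroup G} (h1 : K ≤ L) (h2 : L ≤ H) (m : obj K),
    ind h2 (ind h1 m) = ind (h1.trans h2) m
  res_smul : ∀ {L H : Subgroup G} (h : L ≤ H) (r : R.obj H) (m : obj H),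
    res h (r • m) = R.res h r • res h m
  frob₁ : ∀ {L H : Subgroup G} (h : L ≤ H) (r : R.obj H) (m : obj L),
    r • ind h m = ind h (R.res h r • m)
  frob₂ : ∀ {L H : Subgroup G} (h : L ≤ H) (r : R.obj L) (m : obj H),
    R.ind h r • m = ind h (r • res h m)

attribute [instance] MackeyModule.addgrp MackeyModule.mod

/-- A subgroup is *elementary* if it is the internal direct product of a `p`-group `P`
and a cyclic group `C` of order prime to `p`. -/
def IsElementary {G : Type u} [Group G] (H : Subgroup G) : Prop :=
  ∃ (p : ℕ) (P C : Subgroup G), p.Prime ∧ P ≤ H ∧ C ≤ H ∧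
    IsPGroup p P ∧ IsCyclic C ∧ ¬ p ∣ Nat.card C ∧
    (∀ x ∈ P, ∀ y ∈ C, Commute x y) ∧ P ⊔ C = H ∧ P ⊓ C = ⊥

/-- Let `G` be a finite group and `M` a Mackey module over the
representation Green functor `R = R^G`; the defining property of `R^G` that is used is
Artin's induction theorem: after multiplying by a nonzero integer, every element of
`R[G]` is a sum of elements induced from cyclic subgroups (hypothesis `hArtin`).
If `M[C] ⊗ ℚ = 0` (i.e. every element of `M[C]` is torsion) for all cyclic subgroups
`C ≤ G`, then `M[G] ⊗ ℚ = 0` (every element of `M[G]` is torsion). -/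
theorem stmt4 {G : Type u} [Group G] [Finite G] (R : GreenFunctor G)
    (M : MackeyModule R)
    (hArtin : ∀ y : R.obj ⊤, ∃ (N : ℕ), N ≠ 0 ∧ ∃ (n : ℕ) (C : Fin n → Subgroup G)
      (x : ∀ i, R.obj (C i)), (∀ i, IsCyclic (C i)) ∧
      ∑ i, R.ind le_top (x i) = N • y)
    (hvanish : ∀ C : Subgroup G, IsCyclic C → ∀ m : M.obj C,
      ∃ k : ℕ, k ≠ 0 ∧ k • m = 0) :
    ∀ m : M.obj (⊤ : Subgroup G), ∃ k : ℕ, k ≠ 0 ∧ k • m = 0 := by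
  intro m
  obtain ⟨N, hN, n, C, x, hcyc, hsum⟩ := hArtin 1
  choose k hk hk0 using fun i => hvanish (C i) (hcyc i) (x i • (M.res (le_top : C i ≤ ⊤) m : M.obj (C i)))
  refine ⟨(∏ i, k i) * N, mul_ne_zero (Finset.prod_ne_zero_iff.2 fun i _ => hk i) hN, ?_⟩
  have h1 : (N : ℕ) • m = ∑ i, M.ind (le_top : C i ≤ ⊤) (x i • M.res (le_top : C i ≤ ⊤) m) := by
    calc (N : ℕ) • m = ((N • (1 : R.obj ⊤)) : R.obj ⊤) • m := by
          rw [nsmul_eq_mul, mul_one]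
          simp [Nat.cast_smul_eq_nsmul]
      _ = (∑ i, R.ind le_top (x i)) • m := by rw [hsum]
      _ = ∑ i, (R.ind le_top (x i)) • m := Finset.sum_smul
      _ = ∑ i, M.ind (le_top : C i ≤ ⊤) (x i • M.res (le_top : C i ≤ ⊤) m) := by
          exact Finset.sum_congr rfl fun i _ => M.frob₂ le_top (x i) m
  rw [mul_smul, h1, Finset.smul_sum]
  refine Finset.sum_eq_zero fun i _ => ?_
  obtain ⟨c, hc⟩ : k i ∣ ∏ j, k j := Finset.dvd_prod_of_mem k (Finset.mem_univ i)
  rw [← map_nsmul, hc, mul_comm, mul_smul, hk0, smul_zero, map_zero]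
end

section
/- Let G be a finite group and G' ≤ G. The induction functor Ind_{G'}^G from Mackey functors for G' to Mackey functors for G, given on G'-sets by Ind_{G'}^G(M)(X) = M(Res^G_{G'} X), is both left and right adjoint to the restriction functor Res^G_{G'} given by Res^G_{G'}(N)(Y) = N(Ind_{G'}^G Y). -/
/-- A Mackey functor for `G` in the `G`-set picture: a pair of functorialities
(`star` contravariant, `costar` covariant) on finite `G`-sets with common values `val`,
sending disjoint unions to direct sums and satisfying the pullback axiom. -/
structure MackeyFun (G : Type) [Group G] : Type 1 where
  val : (X : Type) → [Finite X] → [MulAction G X] → Type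
  acg : ∀ (X : Type) [Finite X] [MulAction G X], AddCommGroup (val X)
  star : ∀ {X Y : Type} [Finite X] [MulAction G X] [Finite Y] [MulAction G Y]
    (f : X → Y), (∀ (g : G) (x : X), f (g • x) = g • f x) → (val Y →+ val X)
  costar : ∀ {X Y : Type} [Finite X] [MulAction G X] [Finite Y] [MulAction G Y]
    (f : X → Y), (∀ (g : G) (x : X), f (g • x) = g • f x) → (val X →+ val Y)
  star_id : ∀ (X : Type) [Finite X] [MulAction G X]
    (h : ∀ (g : G) (x : X), id (g • x) = g • id x) (v : val X), star id h v = v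
  star_comp : ∀ {X Y Z : Type} [Finite X] [MulAction G X] [Finite Y] [MulAction G Y]
    [Finite Z] [MulAction G Z] (f : X → Y) (hf : ∀ g x, f (g • x) = g • f x)
    (k : Y → Z) (hk : ∀ g y, k (g • y) = g • k y)
    (hkf : ∀ (g : G) (x : X), (k ∘ f) (g • x) = g • (k ∘ f) x) (v : val Z),
    star f hf (star k hk v) = star (k ∘ f) hkf v
  costar_id : ∀ (X : Type) [Finite X] [MulAction G X]
    (h : ∀ (g : G) (x : X), id (g • x) = g • id x) (v : val X), costar id h v = v
  costar_comp : ∀ {X Y Z : Type} [Finite X] [MulAction G X] [Finite Y] [MulAction G Y]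
    [Finite Z] [MulAction G Z] (f : X → Y) (hf : ∀ g x, f (g • x) = g • f x)
    (k : Y → Z) (hk : ∀ g y, k (g • y) = g • k y)
    (hkf : ∀ (g : G) (x : X), (k ∘ f) (g • x) = g • (k ∘ f) x) (v : val X),
    costar k hk (costar f hf v) = costar (k ∘ f) hkf v
  additivity : ∀ {X Y : Type} [Finite X] [MulAction G X] [Finite Y] [MulAction G Y]
    (h₁ : ∀ (g : G) (x : X), (Sum.inl (g • x) : X ⊕ Y) = g • Sum.inl x)
    (h₂ : ∀ (g : G) (y : Y), (Sum.inr (g • y) : X ⊕ Y) = g • Sum.inr y),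
    Function.Bijective
      (fun v : val (X ⊕ Y) => (star Sum.inl h₁ v, star Sum.inr h₂ v))
  pullback : ∀ {X Y Z W : Type} [Finite X] [MulAction G X] [Finite Y] [MulAction G Y]
    [Finite Z] [MulAction G Z] [Finite W] [MulAction G W]
    (p : W → X) (hp : ∀ g w, p (g • w) = g • p w)
    (q : W → Y) (hq : ∀ g w, q (g • w) = g • q w)
    (f : X → Z) (hf : ∀ g x, f (g • x) = g • f x)
    (k : Y → Z) (hk : ∀ g y, k (g • y) = g • k y),
    (∀ w, f (p w) = k (q w)) →
    (∀ (x : X) (y : Y), f x = k y → ∃! w, p w = x ∧ q w = y) →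
    ∀ v : val X, star k hk (costar f hf v) = costar q hq (star p hp v)

attribute [instance] MackeyFun.acg

/-- A morphism of Mackey functors. -/
structure MackeyHom {G : Type} [Group G] (M N : MackeyFun G) where
  app : ∀ (X : Type) [Finite X] [MulAction G X], M.val X →+ N.val X
  nat_star : ∀ {X Y : Type} [Finite X] [MulAction G X] [Finite Y] [MulAction G Y]
    (f : X → Y) (hf : ∀ g x, f (g • x) = g • f x) (v : M.val Y),
    app X (M.star f hf v) = N.star f hf (app Y v)
  nat_costar : ∀ {X Y : Type} [Finite X] [MulAction G X] [Finite Y] [MulAction G Y]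
    (f : X → Y) (hf : ∀ g x, f (g • x) = g • f x) (v : M.val X),
    app Y (M.costar f hf v) = N.costar f hf (app X v)

/-- Composition of morphisms of Mackey functors. -/
def MackeyHom.comp {G : Type} [Group G] {M N P : MackeyFun G}
    (ψ : MackeyHom N P) (φ : MackeyHom M N) : MackeyHom M P where
  app X := (ψ.app X).comp (φ.app X)
  nat_star := by
    intro X Y _ _ _ _ f hf v
    simp [φ.nat_star f hf v, ψ.nat_star f hf (φ.app Y v)]
  nat_costar := by
    intro X Y _ _ _ _ f hf v
    simp [φ.nat_costar f hf v, ψ.nat_costar f hf (φ.app X v)]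

variable {G : Type} [Group G]

/-- The defining relation of the induced `G`-set `G ×_{G'} Y`. -/
def indRel (G' : Subgroup G) (Y : Type) [MulAction ↥G' Y] : Setoid (G × Y) where
  r p q := ∃ s : ↥G', q.1 = p.1 * (s : G)⁻¹ ∧ q.2 = s • p.2
  iseqv := by
    constructor
    · intro p; exact ⟨1, by simp⟩
    · rintro p q ⟨s, h1, h2⟩
      exact ⟨s⁻¹, by simp [h1, h2, mul_assoc]⟩
    · rintro p q r ⟨s, h1, h2⟩ ⟨t, h3, h4⟩
      refine ⟨t * s, ?_, ?_⟩
      · simp [h3, h1, mul_assoc]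
      · simp [h4, h2, mul_smul]

/-- The induced `G`-set `Ind_{G'}^G Y = G ×_{G'} Y`. -/
def IndGSet (G' : Subgroup G) (Y : Type) [MulAction ↥G' Y] : Type :=
  Quotient (indRel G' Y)

instance (G' : Subgroup G) (Y : Type) [MulAction ↥G' Y] :
    MulAction G (IndGSet G' Y) where
  smul g := Quotient.map (fun p => (g * p.1, p.2)) (by
    rintro p q ⟨s, h1, h2⟩
    exact ⟨s, by simp [h1, mul_assoc], h2⟩)
  one_smul := by
    rintro ⟨p⟩
    exact congrArg (Quotient.mk _) (by simp)
  mul_smul := by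
    intro a b
    rintro ⟨p⟩
    exact congrArg (Quotient.mk _) (by simp [mul_assoc])

instance (G' : Subgroup G) (Y : Type) [Finite G] [Finite Y] [MulAction ↥G' Y] :
    Finite (IndGSet G' Y) :=
  Quotient.finite _

section Stmt13Aux

variable {G : Type} [Group G] {G' : Subgroup G}

theorem star_congr {H : Type} [Group H] (M : MackeyFun H) {X Y : Type} [Finite X]
    [MulAction H X] [Finite Y] [MulAction H Y] {f f' : X → Y} (h : f = f')
    (hf : ∀ g x, f (g • x) = g • f x) (hf' : ∀ g x, f' (g • x) = g • f' x) (v : M.val Y) :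
    M.star f hf v = M.star f' hf' v := by subst h; rfl

theorem costar_congr {H : Type} [Group H] (M : MackeyFun H) {X Y : Type} [Finite X]
    [MulAction H X] [Finite Y] [MulAction H Y] {f f' : X → Y} (h : f = f')
    (hf : ∀ g x, f (g • x) = g • f x) (hf' : ∀ g x, f' (g • x) = g • f' x) (v : M.val X) :
    M.costar f hf v = M.costar f' hf' v := by subst h; rfl

theorem star_bij {H : Type} [Group H] (M : MackeyFun H) {X Y : Type} [Finite X]
    [MulAction H X] [Finite Y] [MulAction H Y] (f : X → Y)
    (hf : ∀ g x, f (g • x) = g • f x) (g : Y → X)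
    (hg : ∀ (a : H) (y : Y), g (a • y) = a • g y)
    (h1 : ∀ y, f (g y) = y) (h2 : ∀ x, g (f x) = x) :
    Function.Bijective (M.star f hf) := by
  have hfg : ∀ (a : H) (y : Y), (f ∘ g) (a • y) = a • (f ∘ g) y := fun a y => by
    simp only [Function.comp_apply, hg, hf]
  have hgf : ∀ (a : H) (x : X), (g ∘ f) (a • x) = a • (g ∘ f) x := fun a x => by
    simp only [Function.comp_apply, hg, hf]
  have hid : ∀ (a : H) (x : X), (id : X → X) (a • x) = a • id x := fun _ _ => rfl
  have hidY : ∀ (a : H) (y : Y), (id : Y → Y) (a • y) = a • id y := fun _ _ => rfl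
  have key1 : ∀ v, M.star g hg (M.star f hf v) = v := fun v =>
    (M.star_comp g hg f hf hfg v).trans
      ((star_congr M (funext h1) hfg hidY v).trans (M.star_id Y hidY v))
  have key2 : ∀ v, M.star f hf (M.star g hg v) = v := fun v =>
    (M.star_comp f hf g hg hgf v).trans
      ((star_congr M (funext h2) hgf hid v).trans (M.star_id X hid v))
  exact ⟨Function.LeftInverse.injective key1, Function.RightInverse.surjective key2⟩

theorem hom_ext {H : Type} [Group H] {M N : MackeyFun H} {φ ψ : MackeyHom M N}
    (h : ∀ (X : Type) [Finite X] [MulAction H X] (v : M.val X), φ.app X v = ψ.app X v) :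
    φ = ψ := by
  cases φ with
  | mk a na nc =>
    cases ψ with
    | mk b nb nd =>
      have : a = b := funext fun X => funext fun i => funext fun j =>
        AddMonoidHom.ext (@h X i j)
      subst this
      rfl

theorem irel_sound {Y : Type} [MulAction ↥G' Y] {g h : G} {y z : Y} (s : ↥G')
    (h1 : h = g * (s : G)⁻¹) (h2 : z = s • y) :
    Quotient.mk (indRel G' Y) (g, y) = Quotient.mk (indRel G' Y) (h, z) :=
  Quotient.sound ⟨s, h1, h2⟩

theorem irel_elim {Y : Type} [MulAction ↥G' Y] {g h : G} {y z : Y}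
    (h' : Quotient.mk (indRel G' Y) (g, y) = Quotient.mk (indRel G' Y) (h, z)) :
    ∃ s : ↥G', h = g * (s : G)⁻¹ ∧ z = s • y :=
  Quotient.exact h'

/-- The functorial action of `IndGSet` on equivariant maps. -/
def indMap {X Y : Type} [MulAction ↥G' X] [MulAction ↥G' Y] (f : X → Y)
    (hf : ∀ (s : ↥G') (x : X), f (s • x) = s • f x) :
    IndGSet G' X → IndGSet G' Y :=
  Quotient.lift (fun p => Quotient.mk (indRel G' Y) (p.1, f p.2)) (by
    rintro ⟨g, x⟩ ⟨h, y⟩ hr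
    obtain ⟨s, h1, h2⟩ := (hr : ∃ s : ↥G', h = g * (s : G)⁻¹ ∧ y = s • x)
    exact irel_sound s h1 (by rw [h2, hf]))

theorem indMap_mk {X Y : Type} [MulAction ↥G' X] [MulAction ↥G' Y] (f : X → Y)
    (hf : ∀ (s : ↥G') (x : X), f (s • x) = s • f x) (g : G) (x : X) :
    indMap f hf (Quotient.mk (indRel G' X) (g, x)) =
      Quotient.mk (indRel G' Y) (g, f x) := rfl

theorem indMap_smul {X Y : Type} [MulAction ↥G' X] [MulAction ↥G' Y] (f : X → Y)
    (hf : ∀ (s : ↥G') (x : X), f (s • x) = s • f x) :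
    ∀ (g : G) (z : IndGSet G' X), indMap f hf (g • z) = g • indMap f hf z := by
  intro g z
  induction z using Quotient.ind
  rfl

theorem indMap_id {Y : Type} [MulAction ↥G' Y]
    (h : ∀ (s : ↥G') (y : Y), id (s • y) = s • id y) :
    indMap (id : Y → Y) h = id :=
  funext fun z => by induction z using Quotient.ind; rfl

theorem indMap_comp {X Y Z : Type} [MulAction ↥G' X] [MulAction ↥G' Y] [MulAction ↥G' Z]
    (f : X → Y) (hf : ∀ (s : ↥G') x, f (s • x) = s • f x)
    (k : Y → Z) (hk : ∀ (s : ↥G') y, k (s • y) = s • k y)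
    (hkf : ∀ (s : ↥G') x, (k ∘ f) (s • x) = s • (k ∘ f) x) :
    indMap k hk ∘ indMap f hf = indMap (k ∘ f) hkf :=
  funext fun z => by induction z using Quotient.ind; rfl

/-- The unit map `Y → Res Ind Y`. -/
def eta (Y : Type) [MulAction ↥G' Y] : Y → IndGSet G' Y :=
  fun y => Quotient.mk (indRel G' Y) (1, y)

theorem eta_smul (Y : Type) [MulAction ↥G' Y] :
    ∀ (s : ↥G') (y : Y), eta (G' := G') Y (s • y) = s • eta Y y := fun s y =>
  (irel_sound (g := (s : G) * 1) (h := 1) (y := y) (z := s • y) s (by simp) rfl).symm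

theorem eta_injective (Y : Type) [MulAction ↥G' Y] :
    Function.Injective (eta (G' := G') Y) := by
  intro a b h
  obtain ⟨s, h1, h2⟩ := irel_elim h
  rw [one_mul] at h1
  have hs : s = 1 := Subtype.ext (by
    rw [OneMemClass.coe_one]
    exact inv_eq_one.mp h1.symm)
  rw [h2, hs, one_smul]

/-- The counit map `Ind Res X → X`. -/
def eps (X : Type) [MulAction G X] : IndGSet G' X → X :=
  Quotient.lift (fun p => p.1 • p.2) (by
    rintro ⟨g, x⟩ ⟨h, y⟩ hr
    obtain ⟨s, h1, h2⟩ := (hr : ∃ s : ↥G', h = g * (s : G)⁻¹ ∧ y = s • x)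
    simp only at h1 h2
    show g • x = h • y
    rw [h1, h2]
    show g • x = (g * (s : G)⁻¹) • ((s : G) • x)
    rw [smul_smul, mul_assoc, inv_mul_cancel, mul_one])

theorem eps_mk (X : Type) [MulAction G X] (g : G) (x : X) :
    eps (G' := G') X (Quotient.mk (indRel G' X) (g, x)) = g • x := rfl

theorem eps_smul (X : Type) [MulAction G X] :
    ∀ (g : G) (z : IndGSet G' X), eps (G' := G') X (g • z) = g • eps X z := by
  intro g z
  induction z using Quotient.ind with
  | _ p => exact (mul_smul g p.1 p.2)

theorem eps_eta (X : Type) [MulAction G X] (x : X) :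
    eps (G' := G') X (eta X x) = x := one_smul G x

theorem eps_indMap_eta (Y : Type) [MulAction ↥G' Y] (z : IndGSet G' Y) :
    eps (IndGSet G' Y) (indMap (eta Y) (eta_smul Y) z) = z := by
  induction z using Quotient.ind with
  | _ p => exact congrArg (Quotient.mk _) (by simp)

theorem eu_swap {γ : Type} {A B : γ → Prop} (h : ∃! w, A w ∧ B w) :
    ∃! w, B w ∧ A w :=
  ⟨h.choose, ⟨h.choose_spec.1.2, h.choose_spec.1.1⟩,
    fun w hw => h.choose_spec.2 w ⟨hw.2, hw.1⟩⟩

theorem ind_comm {W X Y Z : Type} [MulAction ↥G' W] [MulAction ↥G' X] [MulAction ↥G' Y]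
    [MulAction ↥G' Z]
    (p : W → X) (hp : ∀ (s : ↥G') w, p (s • w) = s • p w)
    (q : W → Y) (hq : ∀ (s : ↥G') w, q (s • w) = s • q w)
    (f : X → Z) (hf : ∀ (s : ↥G') x, f (s • x) = s • f x)
    (k : Y → Z) (hk : ∀ (s : ↥G') y, k (s • y) = s • k y)
    (hc : ∀ w, f (p w) = k (q w)) :
    ∀ c, indMap f hf (indMap p hp c) = indMap k hk (indMap q hq c) := by
  intro c
  induction c using Quotient.ind with
  | _ r => exact congrArg (Quotient.mk _) (by simp only; rw [hc])

theorem ind_pullback {W X Y Z : Type} [MulAction ↥G' W] [MulAction ↥G' X] [MulAction ↥G' Y]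
    [MulAction ↥G' Z]
    (p : W → X) (hp : ∀ (s : ↥G') w, p (s • w) = s • p w)
    (q : W → Y) (hq : ∀ (s : ↥G') w, q (s • w) = s • q w)
    (f : X → Z) (hf : ∀ (s : ↥G') x, f (s • x) = s • f x)
    (k : Y → Z) (hk : ∀ (s : ↥G') y, k (s • y) = s • k y)
    (hpb : ∀ x y, f x = k y → ∃! w, p w = x ∧ q w = y) :
    ∀ (a : IndGSet G' X) (b : IndGSet G' Y), indMap f hf a = indMap k hk b →
      ∃! c : IndGSet G' W, indMap p hp c = a ∧ indMap q hq c = b := by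
  rintro ⟨⟨g, x⟩⟩ ⟨⟨h, y⟩⟩ hab
  obtain ⟨s, hs1, hs2⟩ := irel_elim hab
  have hfk : f (s • x) = k y := by rw [hf, hs2]
  obtain ⟨w, ⟨hw1, hw2⟩, huniq⟩ := hpb (s • x) y hfk
  refine ⟨Quotient.mk _ (h, w), ⟨?_, ?_⟩, ?_⟩
  · show Quotient.mk (indRel G' X) (h, p w) = Quotient.mk (indRel G' X) (g, x)
    rw [hw1]
    exact (irel_sound s hs1 rfl).symm
  · show Quotient.mk (indRel G' Y) (h, q w) = Quotient.mk (indRel G' Y) (h, y)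
    rw [hw2]
  · rintro ⟨⟨h₂, w₂⟩⟩ ⟨hc1, hc2⟩
    obtain ⟨u, hu1, hu2⟩ := irel_elim hc1
    obtain ⟨t, ht1, ht2⟩ := irel_elim hc2
    have hts : t = s * u := by
      have h1 : h₂ * (↑t : G)⁻¹ = h₂ * ((↑u : G)⁻¹ * (↑s : G)⁻¹) := by
        rw [← mul_assoc, ← hu1, ← hs1, ht1]
      have h2 := mul_left_cancel h1
      rw [← mul_inv_rev] at h2
      exact Subtype.ext (by rw [Subgroup.coe_mul]; exact inv_injective h2)
    have hw : t • w₂ = w := by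
      refine huniq (t • w₂) ⟨?_, ?_⟩
      · rw [hp, hts, mul_smul, ← hu2]
      · rw [hq, ← ht2]
    exact irel_sound t ht1 hw.symm

theorem eta_pullback {Y Y' : Type} [MulAction ↥G' Y] [MulAction ↥G' Y'] (f : Y → Y')
    (hf : ∀ (s : ↥G') y, f (s • y) = s • f y) :
    ∀ (y' : Y') (z : IndGSet G' Y), eta Y' y' = indMap f hf z →
      ∃! w : Y, f w = y' ∧ eta Y w = z := by
  rintro y' ⟨⟨g, y⟩⟩ h
  obtain ⟨s, hs1, hs2⟩ := irel_elim h
  simp only at hs1 hs2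
  have hz : eta Y (s⁻¹ • y) = Quotient.mk (indRel G' Y) (g, y) :=
    (irel_sound (h := 1) s⁻¹ (by rw [hs1]; simp) rfl).symm
  refine ⟨s⁻¹ • y, ⟨?_, hz⟩, ?_⟩
  · rw [hf, hs2, inv_smul_smul]
  · rintro w₂ ⟨hw1, hw2⟩
    exact eta_injective Y (hw2.trans hz.symm)

theorem eps_pullback {X X' : Type} [MulAction G X] [MulAction G X'] (f : X → X')
    (hfG : ∀ (g : G) (x : X), f (g • x) = g • f x) :
    ∀ (a : IndGSet G' X') (x : X), eps X' a = f x →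
      ∃! w : IndGSet G' X, indMap f (fun s x => hfG ↑s x) w = a ∧ eps X w = x := by
  rintro ⟨⟨g, x'⟩⟩ x h
  have h' : g • x' = f x := h
  refine ⟨Quotient.mk _ (g, g⁻¹ • x), ⟨?_, ?_⟩, ?_⟩
  · show Quotient.mk (indRel G' X') (g, f (g⁻¹ • x)) = Quotient.mk (indRel G' X') (g, x')
    exact congrArg (fun t => Quotient.mk (indRel G' X') (g, t))
      (by rw [hfG, ← h', inv_smul_smul])
  · show g • (g⁻¹ • x) = x
    exact smul_inv_smul g x
  · rintro ⟨⟨h₂, u⟩⟩ ⟨hc1, hc2⟩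
    obtain ⟨s, hs1, hs2⟩ := irel_elim hc1
    have hc2' : h₂ • u = x := hc2
    refine irel_sound s hs1 ?_
    show g⁻¹ • x = (s : G) • u
    rw [← hc2', hs1]
    rw [mul_inv_rev, inv_inv, mul_smul, inv_smul_smul]

end Stmt13Aux
section Stmt13Main

variable {G : Type} [Group G]

/-- Induction of Mackey functors: `Ind(M)(X) = M(Res X)`. -/
def IndMF (G' : Subgroup G) (M : MackeyFun ↥G') : MackeyFun G where
  val X := M.val X
  acg X := M.acg X
  star f hf := M.star f (fun s x => hf ↑s x)
  costar f hf := M.costar f (fun s x => hf ↑s x)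
  star_id X _ _ h v := M.star_id X (fun _ _ => rfl) v
  star_comp f hf k hk hkf v :=
    M.star_comp f (fun s x => hf ↑s x) k (fun s y => hk ↑s y) (fun s x => hkf ↑s x) v
  costar_id X _ _ h v := M.costar_id X (fun _ _ => rfl) v
  costar_comp f hf k hk hkf v :=
    M.costar_comp f (fun s x => hf ↑s x) k (fun s y => hk ↑s y) (fun s x => hkf ↑s x) v
  additivity h₁ h₂ :=
    M.additivity (fun s x => h₁ ↑s x) (fun s y => h₂ ↑s y)
  pullback p hp q hq f hf k hk hc hu v :=
    M.pullback p (fun s w => hp ↑s w) q (fun s w => hq ↑s w) f (fun s x => hf ↑s x)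
      k (fun s y => hk ↑s y) hc hu v

variable {G' : Subgroup G}

/-- The sum inclusion into the induced sum. -/
def indSum {X Y : Type} [MulAction ↥G' X] [MulAction ↥G' Y] :
    IndGSet G' X ⊕ IndGSet G' Y → IndGSet G' (X ⊕ Y) :=
  Sum.elim (indMap Sum.inl (fun _ _ => rfl)) (indMap Sum.inr (fun _ _ => rfl))

/-- The inverse of `indSum`. -/
def sumSplit {X Y : Type} [MulAction ↥G' X] [MulAction ↥G' Y] :
    IndGSet G' (X ⊕ Y) → IndGSet G' X ⊕ IndGSet G' Y :=
  Quotient.lift (fun p => match p with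
    | (g, Sum.inl x) => Sum.inl (Quotient.mk (indRel G' X) (g, x))
    | (g, Sum.inr y) => Sum.inr (Quotient.mk (indRel G' Y) (g, y)))
    (by
      rintro ⟨g, x | y⟩ ⟨h, z⟩ hr
      · obtain ⟨s, h1, h2⟩ :=
          (hr : ∃ s : ↥G', h = g * (s : G)⁻¹ ∧ z = s • (Sum.inl x : X ⊕ Y))
        have h2' : z = Sum.inl (s • x) := h2
        subst h2'
        exact congrArg Sum.inl (irel_sound s h1 rfl)
      · obtain ⟨s, h1, h2⟩ :=
          (hr : ∃ s : ↥G', h = g * (s : G)⁻¹ ∧ z = s • (Sum.inr y : X ⊕ Y))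
        have h2' : z = Sum.inr (s • y) := h2
        subst h2'
        exact congrArg Sum.inr (irel_sound s h1 rfl))

theorem indSum_smul {X Y : Type} [MulAction ↥G' X] [MulAction ↥G' Y] :
    ∀ (g : G) (z : IndGSet G' X ⊕ IndGSet G' Y),
      indSum (g • z) = g • indSum z := by
  rintro g (a | b)
  · induction a using Quotient.ind; rfl
  · induction b using Quotient.ind; rfl

theorem sumSplit_smul {X Y : Type} [MulAction ↥G' X] [MulAction ↥G' Y] :
    ∀ (g : G) (z : IndGSet G' (X ⊕ Y)),
      sumSplit (g • z) = g • sumSplit z := by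
  intro g z
  induction z using Quotient.ind with
  | _ p =>
    rcases p with ⟨h, x | y⟩ <;> rfl

theorem indSum_sumSplit {X Y : Type} [MulAction ↥G' X] [MulAction ↥G' Y] :
    ∀ z : IndGSet G' (X ⊕ Y), indSum (sumSplit z) = z := by
  intro z
  induction z using Quotient.ind with
  | _ p =>
    rcases p with ⟨h, x | y⟩ <;> rfl

theorem sumSplit_indSum {X Y : Type} [MulAction ↥G' X] [MulAction ↥G' Y] :
    ∀ z : IndGSet G' X ⊕ IndGSet G' Y, sumSplit (indSum z) = z := by
  rintro (a | b)
  · induction a using Quotient.ind; rfl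
  · induction b using Quotient.ind; rfl

/-- Restriction of Mackey functors: `Res(N)(Y) = N(G ×_{G'} Y)`. -/
def ResMF (G' : Subgroup G) [Finite G] (N : MackeyFun G) : MackeyFun ↥G' where
  val Y := N.val (IndGSet G' Y)
  acg Y := N.acg _
  star f hf := N.star (indMap f hf) (indMap_smul f hf)
  costar f hf := N.costar (indMap f hf) (indMap_smul f hf)
  star_id Y _ _ h v :=
    (star_congr N (indMap_id h) (indMap_smul id h) (fun _ _ => rfl) v).trans
      (N.star_id _ (fun _ _ => rfl) v)
  star_comp {X Y Z} _ _ _ _ _ _ f hf k hk hkf v :=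
    (N.star_comp (indMap f hf) (indMap_smul f hf) (indMap k hk) (indMap_smul k hk)
      (fun g z => by
        simp only [Function.comp_apply, indMap_smul]) v).trans
      (star_congr N (indMap_comp f hf k hk hkf)
        (fun g z => by simp only [Function.comp_apply, indMap_smul])
        (indMap_smul (k ∘ f) hkf) v)
  costar_id Y _ _ h v :=
    (costar_congr N (indMap_id h) (indMap_smul id h) (fun _ _ => rfl) v).trans
      (N.costar_id _ (fun _ _ => rfl) v)
  costar_comp {X Y Z} _ _ _ _ _ _ f hf k hk hkf v :=
    (N.costar_comp (indMap f hf) (indMap_smul f hf) (indMap k hk) (indMap_smul k hk)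
      (fun g z => by simp only [Function.comp_apply, indMap_smul]) v).trans
      (costar_congr N (indMap_comp f hf k hk hkf)
        (fun g z => by simp only [Function.comp_apply, indMap_smul])
        (indMap_smul (k ∘ f) hkf) v)
  additivity {X Y} _ _ _ _ h₁ h₂ := by
    have hbij2 : Function.Bijective (N.star (indSum (G' := G') (X := X) (Y := Y)) indSum_smul) :=
      star_bij N (indSum (G' := G') (X := X) (Y := Y)) (indSum_smul (G' := G') (X := X) (Y := Y)) (sumSplit (G' := G') (X := X) (Y := Y)) (sumSplit_smul (G' := G') (X := X) (Y := Y)) (indSum_sumSplit (G' := G') (X := X) (Y := Y)) (sumSplit_indSum (G' := G') (X := X) (Y := Y))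
    have hadd := N.additivity (X := IndGSet G' X) (Y := IndGSet G' Y)
      (fun _ _ => rfl) (fun _ _ => rfl)
    have heq : (fun v : N.val (IndGSet G' (X ⊕ Y)) =>
        (N.star (indMap Sum.inl h₁) (indMap_smul Sum.inl h₁) v,
         N.star (indMap Sum.inr h₂) (indMap_smul Sum.inr h₂) v)) =
        (fun w => (N.star Sum.inl (fun _ _ => rfl) w, N.star Sum.inr (fun _ _ => rfl) w)) ∘
          N.star indSum indSum_smul := by
      funext v
      simp only [Function.comp_apply]
      refine congrArg₂ Prod.mk ?_ ?_
      · rw [N.star_comp Sum.inl (fun _ _ => rfl) indSum indSum_smul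
          (fun g a => indSum_smul g (Sum.inl a))]
        exact star_congr N (funext fun z => by induction z using Quotient.ind; rfl)
          (indMap_smul Sum.inl h₁) (fun g a => indSum_smul g (Sum.inl a)) v
      · rw [N.star_comp Sum.inr (fun _ _ => rfl) indSum indSum_smul
          (fun g a => indSum_smul g (Sum.inr a))]
        exact star_congr N (funext fun z => by induction z using Quotient.ind; rfl)
          (indMap_smul Sum.inr h₂) (fun g a => indSum_smul g (Sum.inr a)) v
    have : Function.Bijective (fun v : N.val (IndGSet G' (X ⊕ Y)) =>
        (N.star (indMap Sum.inl h₁) (indMap_smul Sum.inl h₁) v,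
         N.star (indMap Sum.inr h₂) (indMap_smul Sum.inr h₂) v)) := by
      rw [heq]; exact hadd.comp hbij2
    exact this
  pullback p hp q hq f hf k hk hc hu v :=
    N.pullback (indMap p hp) (indMap_smul p hp) (indMap q hq) (indMap_smul q hq)
      (indMap f hf) (indMap_smul f hf) (indMap k hk) (indMap_smul k hk)
      (ind_comm p hp q hq f hf k hk hc) (ind_pullback p hp q hq f hf k hk hu) v

end Stmt13Main
section Stmt13Adj

variable {G : Type} [Group G] {G' : Subgroup G}

/-- Induction on morphisms. -/
def IndMapD (G' : Subgroup G) {M M' : MackeyFun ↥G'} (φ : MackeyHom M M') :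
    MackeyHom (IndMF G' M) (IndMF G' M') where
  app X := φ.app X
  nat_star f hf v := φ.nat_star f (fun s x => hf ↑s x) v
  nat_costar f hf v := φ.nat_costar f (fun s x => hf ↑s x) v

/-- Restriction on morphisms. -/
def ResMapD (G' : Subgroup G) [Finite G] {N N' : MackeyFun G} (ψ : MackeyHom N N') :
    MackeyHom (ResMF G' N) (ResMF G' N') where
  app Y := ψ.app (IndGSet G' Y)
  nat_star f hf v := ψ.nat_star (indMap f hf) (indMap_smul f hf) v
  nat_costar f hf v := ψ.nat_costar (indMap f hf) (indMap_smul f hf) v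

variable [Finite G]

/-- The unit `M → Res Ind M` of the left adjunction. -/
def unitM (M : MackeyFun ↥G') : MackeyHom M (ResMF G' (IndMF G' M)) where
  app Y := M.costar (eta Y) (eta_smul Y)
  nat_star {Y Y'} _ _ _ _ f hf v :=
    (M.pullback f hf (eta Y) (eta_smul Y) (eta Y') (eta_smul Y')
      (indMap f hf) (fun s z => indMap_smul f hf ↑s z)
      (fun y => rfl) (eta_pullback f hf) v).symm
  nat_costar {Y Y'} _ _ _ _ f hf v :=
    (M.costar_comp f hf (eta Y') (eta_smul Y')
      (fun s y => by show eta Y' (f (s • y)) = s • eta Y' (f y); rw [hf]; exact eta_smul Y' s (f y)) v).trans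
      ((costar_congr M (funext fun y => rfl)
        (fun s y => by show eta Y' (f (s • y)) = s • eta Y' (f y); rw [hf]; exact eta_smul Y' s (f y))
        (fun s y => by show indMap f hf (eta Y (s • y)) = s • indMap f hf (eta Y y); rw [eta_smul]; exact indMap_smul f hf ↑s (eta Y y)) v).trans
      (M.costar_comp (eta Y) (eta_smul Y) (indMap f hf)
        (fun s z => indMap_smul f hf ↑s z)
        (fun s y => by show indMap f hf (eta Y (s • y)) = s • indMap f hf (eta Y y); rw [eta_smul]; exact indMap_smul f hf ↑s (eta Y y)) v).symm)

/-- The counit `Ind Res N → N` of the left adjunction. -/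
def counitN (N : MackeyFun G) : MackeyHom (IndMF G' (ResMF G' N)) N where
  app X := N.costar (eps X) (eps_smul X)
  nat_star {X X'} _ _ _ _ f hf v :=
    (N.pullback (indMap f (fun s x => hf ↑s x)) (indMap_smul f _) (eps X) (eps_smul X)
      (eps X') (eps_smul X') f hf
      (fun w => by
        induction w using Quotient.ind with
        | _ p => exact (hf p.1 p.2).symm)
      (eps_pullback f hf) v).symm
  nat_costar {X X'} _ _ _ _ f hf v :=
    (N.costar_comp (indMap f (fun s x => hf ↑s x)) (indMap_smul f _) (eps X') (eps_smul X')
      (fun g z => by simp only [Function.comp_apply, indMap_smul, eps_smul]) v).trans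
      ((costar_congr N
        (funext fun w => by
          induction w using Quotient.ind with
          | _ p => exact (hf p.1 p.2).symm)
        (fun g z => by simp only [Function.comp_apply, indMap_smul, eps_smul])
        (fun g z => by simp only [Function.comp_apply, eps_smul, hf]) v).trans
      (N.costar_comp (eps X) (eps_smul X) f hf
        (fun g z => by simp only [Function.comp_apply, eps_smul, hf]) v).symm)

/-- The unit `N → Ind Res N` of the right adjunction. -/
def dunitN (N : MackeyFun G) : MackeyHom N (IndMF G' (ResMF G' N)) where
  app X := N.star (eps X) (eps_smul X)
  nat_star {X X'} _ _ _ _ f hf v :=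
    (N.star_comp (eps X) (eps_smul X) f hf
      (fun g z => by simp only [Function.comp_apply, eps_smul, hf]) v).trans
      ((star_congr N
        (funext fun w => by
          induction w using Quotient.ind with
          | _ p => exact (hf p.1 p.2))
        (fun g z => by simp only [Function.comp_apply, eps_smul, hf])
        (fun g z => by simp only [Function.comp_apply, indMap_smul, eps_smul]) v).trans
      (N.star_comp (indMap f (fun s x => hf ↑s x)) (indMap_smul f _) (eps X') (eps_smul X')
        (fun g z => by simp only [Function.comp_apply, indMap_smul, eps_smul]) v).symm)
  nat_costar {X X'} _ _ _ _ f hf v :=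
    N.pullback (eps X) (eps_smul X) (indMap f (fun s x => hf ↑s x)) (indMap_smul f _)
      f hf (eps X') (eps_smul X')
      (fun w => by
        induction w using Quotient.ind with
        | _ p => exact (hf p.1 p.2))
      (fun x a h => eu_swap (eps_pullback f hf a x h.symm)) v

/-- The counit `Res Ind M → M` of the right adjunction. -/
def dcounitM (M : MackeyFun ↥G') : MackeyHom (ResMF G' (IndMF G' M)) M where
  app Y := M.star (eta Y) (eta_smul Y)
  nat_star {Y Y'} _ _ _ _ f hf v :=
    (M.star_comp (eta Y) (eta_smul Y) (indMap f hf) (fun s z => indMap_smul f hf ↑s z)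
      (fun s y => by show indMap f hf (eta Y (s • y)) = s • indMap f hf (eta Y y); rw [eta_smul]; exact indMap_smul f hf ↑s (eta Y y)) v).trans
      ((star_congr M (funext fun y => rfl)
        (fun s y => by show indMap f hf (eta Y (s • y)) = s • indMap f hf (eta Y y); rw [eta_smul]; exact indMap_smul f hf ↑s (eta Y y))
        (fun s y => by show eta Y' (f (s • y)) = s • eta Y' (f y); rw [hf]; exact eta_smul Y' s (f y)) v).trans
      (M.star_comp f hf (eta Y') (eta_smul Y')
        (fun s y => by show eta Y' (f (s • y)) = s • eta Y' (f y); rw [hf]; exact eta_smul Y' s (f y)) v).symm)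
  nat_costar {Y Y'} _ _ _ _ f hf v :=
    M.pullback (eta Y) (eta_smul Y) f hf (indMap f hf) (fun s z => indMap_smul f hf ↑s z)
      (eta Y') (eta_smul Y')
      (fun y => rfl)
      (fun z y' h => eu_swap (eta_pullback f hf y' z h.symm)) v

/-- The left adjunction `Hom(Ind M, N) ≃ Hom(M, Res N)`. -/
def adjEquiv (M : MackeyFun ↥G') (N : MackeyFun G) :
    MackeyHom (IndMF G' M) N ≃ MackeyHom M (ResMF G' N) where
  toFun θ := (ResMapD G' θ).comp (unitM M)
  invFun φ := (counitN N).comp (IndMapD G' φ)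
  left_inv θ := hom_ext fun X _ _ v => by
    show N.costar (eps X) (eps_smul X)
        (θ.app (IndGSet G' X) (M.costar (eta X) (eta_smul X) v)) = θ.app X v
    rw [← θ.nat_costar (eps X) (eps_smul X) (M.costar (eta X) (eta_smul X) v)]
    exact congrArg (θ.app X)
      ((M.costar_comp (eta X) (eta_smul X) (eps X) (fun s z => eps_smul X ↑s z)
        (fun s x => by simp only [Function.comp_apply, eps_eta]) v).trans
        ((costar_congr M (funext fun x => eps_eta X x)
          (fun s x => by simp only [Function.comp_apply, eps_eta])
          (fun _ _ => rfl) v).trans (M.costar_id X (fun _ _ => rfl) v)))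
  right_inv φ := hom_ext fun Y _ _ v => by
    show N.costar (eps (IndGSet G' Y)) (eps_smul _)
        (φ.app (IndGSet G' Y) (M.costar (eta Y) (eta_smul Y) v)) = φ.app Y v
    rw [φ.nat_costar (eta Y) (eta_smul Y) v]
    show N.costar (eps (IndGSet G' Y)) (eps_smul _)
        (N.costar (indMap (eta Y) (eta_smul Y)) (indMap_smul _ _) (φ.app Y v)) = φ.app Y v
    exact (N.costar_comp (indMap (eta Y) (eta_smul Y)) (indMap_smul _ _)
        (eps (IndGSet G' Y)) (eps_smul _)
        (fun g z => by simp only [Function.comp_apply, eps_smul, indMap_smul]) _).trans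
      ((costar_congr N (funext fun z => eps_indMap_eta Y z)
        (fun g z => by simp only [Function.comp_apply, eps_smul, indMap_smul])
        (fun _ _ => rfl) _).trans (N.costar_id _ (fun _ _ => rfl) _))

/-- The right adjunction `Hom(N, Ind M) ≃ Hom(Res N, M)`. -/
def adjEquiv' (M : MackeyFun ↥G') (N : MackeyFun G) :
    MackeyHom N (IndMF G' M) ≃ MackeyHom (ResMF G' N) M where
  toFun θ := (dcounitM M).comp (ResMapD G' θ)
  invFun φ := (IndMapD G' φ).comp (dunitN N)
  left_inv θ := hom_ext fun X _ _ v => by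
    show M.star (eta X) (eta_smul X)
        (θ.app (IndGSet G' X) (N.star (eps X) (eps_smul X) v)) = θ.app X v
    rw [θ.nat_star (eps X) (eps_smul X) v]
    show M.star (eta X) (eta_smul X)
        (M.star (eps X) (fun s z => eps_smul X ↑s z) (θ.app X v)) = θ.app X v
    exact (M.star_comp (eta X) (eta_smul X) (eps X) (fun s z => eps_smul X ↑s z)
        (fun s x => by simp only [Function.comp_apply, eps_eta]) _).trans
      ((star_congr M (funext fun x => eps_eta X x)
        (fun s x => by simp only [Function.comp_apply, eps_eta])
        (fun _ _ => rfl) _).trans (M.star_id X (fun _ _ => rfl) _))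
  right_inv φ := hom_ext fun Y _ _ v => by
    show M.star (eta Y) (eta_smul Y)
        (φ.app (IndGSet G' Y) (N.star (eps (IndGSet G' Y)) (eps_smul _) v)) = φ.app Y v
    rw [← φ.nat_star (eta Y) (eta_smul Y) (N.star (eps (IndGSet G' Y)) (eps_smul _) v)]
    show φ.app Y (N.star (indMap (eta Y) (eta_smul Y)) (indMap_smul _ _)
        (N.star (eps (IndGSet G' Y)) (eps_smul _) v)) = φ.app Y v
    exact congrArg (φ.app Y)
      ((N.star_comp (indMap (eta Y) (eta_smul Y)) (indMap_smul _ _)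
          (eps (IndGSet G' Y)) (eps_smul _)
          (fun g z => by simp only [Function.comp_apply, eps_smul, indMap_smul]) v).trans
        ((star_congr N (funext fun z => eps_indMap_eta Y z)
          (fun g z => by simp only [Function.comp_apply, eps_smul, indMap_smul])
          (fun _ _ => rfl) v).trans (N.star_id _ (fun _ _ => rfl) v)))

end Stmt13Adj
/-- Let `G` be a finite group and `G' ≤ G`.  The induction functor
`Ind_{G'}^G` on Mackey functors, given on `G'`-sets by `Ind(M)(X) = M(Res^G_{G'} X)`,
is both left and right adjoint to the restriction functor `Res^G_{G'}` given by
`Res(N)(Y) = N(Ind_{G'}^G Y) = N(G ×_{G'} Y)`; the adjunction bijections are natural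
in both variables. -/
theorem stmt13 [Finite G] (G' : Subgroup G) :
    ∃ (Ind : MackeyFun ↥G' → MackeyFun G) (Res : MackeyFun G → MackeyFun ↥G')
      (IndMap : ∀ {M M' : MackeyFun ↥G'},
        MackeyHom M M' → MackeyHom (Ind M) (Ind M'))
      (ResMap : ∀ {N N' : MackeyFun G},
        MackeyHom N N' → MackeyHom (Res N) (Res N'))
      (hInd : ∀ (M : MackeyFun ↥G') (X : Type) [Finite X] [MulAction G X],
        (Ind M).val X = M.val X)
      (hRes : ∀ (N : MackeyFun G) (Y : Type) [Finite Y] [MulAction ↥G' Y],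
        (Res N).val Y = N.val (IndGSet G' Y)),
      -- the hom actions of `Ind` and `Res` are the evident ones
      (∀ (M M' : MackeyFun ↥G') (φ : MackeyHom M M') (X : Type) [Finite X]
        [MulAction G X] (v : (Ind M).val X),
        (IndMap φ).app X v = cast (hInd M' X).symm (φ.app X (cast (hInd M X) v))) ∧
      (∀ (N N' : MackeyFun G) (ψ : MackeyHom N N') (Y : Type) [Finite Y]
        [MulAction ↥G' Y] (v : (Res N).val Y),
        (ResMap ψ).app Y v =
          cast (hRes N' Y).symm (ψ.app (IndGSet G' Y) (cast (hRes N Y) v))) ∧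
      -- `Ind` is left adjoint to `Res`, naturally in both variables
      (∃ adj : ∀ (M : MackeyFun ↥G') (N : MackeyFun G),
          MackeyHom (Ind M) N ≃ MackeyHom M (Res N),
        (∀ M N N' (ψ : MackeyHom N N') (θ : MackeyHom (Ind M) N),
          adj M N' (ψ.comp θ) = (ResMap ψ).comp (adj M N θ)) ∧
        (∀ M M' N (φ : MackeyHom M' M) (θ : MackeyHom (Ind M) N),
          adj M' N (θ.comp (IndMap φ)) = (adj M N θ).comp φ)) ∧
      -- `Ind` is right adjoint to `Res`, naturally in both variables
      (∃ adj' : ∀ (M : MackeyFun ↥G') (N : MackeyFun G),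
          MackeyHom N (Ind M) ≃ MackeyHom (Res N) M,
        (∀ M N N' (ψ : MackeyHom N' N) (θ : MackeyHom N (Ind M)),
          adj' M N' (θ.comp ψ) = (adj' M N θ).comp (ResMap ψ)) ∧
        (∀ M M' N (φ : MackeyHom M M') (θ : MackeyHom N (Ind M)),
          adj' M' N ((IndMap φ).comp θ) = φ.comp (adj' M N θ))) := by
  refine ⟨IndMF G', ResMF G', fun {M M'} φ => IndMapD G' φ, fun {N N'} ψ => ResMapD G' ψ,
    fun M X _ _ => rfl, fun N Y _ _ => rfl,
    fun M M' φ X _ _ v => rfl, fun N N' ψ Y _ _ v => rfl,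
    ⟨fun M N => adjEquiv M N, ?_, ?_⟩, ⟨fun M N => adjEquiv' M N, ?_, ?_⟩⟩
  · intro M N N' ψ θ
    exact hom_ext fun Y _ _ v => rfl
  · intro M M' N φ θ
    refine hom_ext fun Y _ _ v => ?_
    show θ.app (IndGSet G' Y) (φ.app (IndGSet G' Y) (M'.costar (eta Y) (eta_smul Y) v))
      = θ.app (IndGSet G' Y) (M.costar (eta Y) (eta_smul Y) (φ.app Y v))
    exact congrArg (θ.app (IndGSet G' Y)) (φ.nat_costar (eta Y) (eta_smul Y) v)
  · intro M N N' ψ θ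
    exact hom_ext fun Y _ _ v => rfl
  · intro M M' N φ θ
    refine hom_ext fun Y _ _ v => ?_
    show M'.star (eta Y) (eta_smul Y) (φ.app (IndGSet G' Y) (θ.app (IndGSet G' Y) v))
      = φ.app Y (M.star (eta Y) (eta_smul Y) (θ.app (IndGSet G' Y) v))
    exact (φ.nat_star (eta Y) (eta_smul Y) (θ.app (IndGSet G' Y) v)).symm
end

section
/- Let G be a finite group, R a commutative Green functor for G, and X a finite G-set. The functor M ↦ M_X on R-Mackey modules, where M_X(Y) := M(Y × X), is its own left and right adjoint: there are natural isomorphisms R-Mac(M_X, N) ≅ R-Mac(M, N_X). -/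
/-- A commutative Green functor for `G` in the `G`-set picture: a Mackey functor with
biadditive external products `mul : R(X) × R(Y) → R(X × Y)` and unit `one ∈ R(pt)`,
natural in both variables (for `star`), satisfying the Frobenius relations (naturality
for `costar`), associativity, unitality and commutativity. -/
structure GreenFun (G : Type) [Group G] extends MackeyFun G where
  mul : ∀ {X Y : Type} [Finite X] [MulAction G X] [Finite Y] [MulAction G Y],
    val X → val Y → val (X × Y)
  one : val PUnit
  mul_add_left : ∀ {X Y : Type} [Finite X] [MulAction G X] [Finite Y] [MulAction G Y]
    (r r' : val X) (s : val Y), mul (r + r') s = mul r s + mul r' s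
  mul_add_right : ∀ {X Y : Type} [Finite X] [MulAction G X] [Finite Y] [MulAction G Y]
    (r : val X) (s s' : val Y), mul r (s + s') = mul r s + mul r s'
  mul_star_left : ∀ {X X' Y : Type} [Finite X] [MulAction G X] [Finite X']
    [MulAction G X'] [Finite Y] [MulAction G Y] (f : X → X')
    (hf : ∀ g x, f (g • x) = g • f x)
    (hf' : ∀ (g : G) (p : X × Y), Prod.map f id (g • p) = g • Prod.map f id p)
    (r : val X') (s : val Y),
    mul (star f hf r) s = star (Prod.map f id) hf' (mul r s)
  mul_star_right : ∀ {X Y Y' : Type} [Finite X] [MulAction G X] [Finite Y]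
    [MulAction G Y] [Finite Y'] [MulAction G Y'] (f : Y → Y')
    (hf : ∀ g y, f (g • y) = g • f y)
    (hf' : ∀ (g : G) (p : X × Y), Prod.map id f (g • p) = g • Prod.map id f p)
    (r : val X) (s : val Y'),
    mul r (star f hf s) = star (Prod.map id f) hf' (mul r s)
  mul_costar_left : ∀ {X X' Y : Type} [Finite X] [MulAction G X] [Finite X']
    [MulAction G X'] [Finite Y] [MulAction G Y] (f : X → X')
    (hf : ∀ g x, f (g • x) = g • f x)
    (hf' : ∀ (g : G) (p : X × Y), Prod.map f id (g • p) = g • Prod.map f id p)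
    (r : val X) (s : val Y),
    mul (costar f hf r) s = costar (Prod.map f id) hf' (mul r s)
  mul_costar_right : ∀ {X Y Y' : Type} [Finite X] [MulAction G X] [Finite Y]
    [MulAction G Y] [Finite Y'] [MulAction G Y'] (f : Y → Y')
    (hf : ∀ g y, f (g • y) = g • f y)
    (hf' : ∀ (g : G) (p : X × Y), Prod.map id f (g • p) = g • Prod.map id f p)
    (r : val X) (s : val Y),
    mul r (costar f hf s) = costar (Prod.map id f) hf' (mul r s)
  mul_assoc : ∀ {X Y Z : Type} [Finite X] [MulAction G X] [Finite Y] [MulAction G Y]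
    [Finite Z] [MulAction G Z]
    (hα : ∀ (g : G) (p : (X × Y) × Z),
      (fun p : (X × Y) × Z => (p.1.1, (p.1.2, p.2))) (g • p) =
        g • (fun p : (X × Y) × Z => (p.1.1, (p.1.2, p.2))) p)
    (r : val X) (s : val Y) (t : val Z),
    mul (mul r s) t =
      star (fun p : (X × Y) × Z => (p.1.1, (p.1.2, p.2))) hα (mul r (mul s t))
  mul_one_left : ∀ {X : Type} [Finite X] [MulAction G X]
    (h : ∀ (g : G) (p : PUnit × X), (g • p).2 = g • p.2) (r : val X),
    mul one r = star (fun p : PUnit × X => p.2) h r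
  mul_one_right : ∀ {X : Type} [Finite X] [MulAction G X]
    (h : ∀ (g : G) (p : X × PUnit), (g • p).1 = g • p.1) (r : val X),
    mul r one = star (fun p : X × PUnit => p.1) h r
  mul_comm : ∀ {X Y : Type} [Finite X] [MulAction G X] [Finite Y] [MulAction G Y]
    (h : ∀ (g : G) (p : X × Y), Prod.swap (g • p) = g • Prod.swap p)
    (r : val X) (s : val Y),
    mul r s = star Prod.swap h (mul s r)

/-- A Mackey module over the Green functor `R`, in the `G`-set picture, with external
action `act : R(X) × M(Y) → M(X × Y)`. -/
structure RModule {G : Type} [Group G] (R : GreenFun G) extends MackeyFun G where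
  act : ∀ {X Y : Type} [Finite X] [MulAction G X] [Finite Y] [MulAction G Y],
    R.val X → val Y → val (X × Y)
  act_add_left : ∀ {X Y : Type} [Finite X] [MulAction G X] [Finite Y] [MulAction G Y]
    (r r' : R.val X) (m : val Y), act (r + r') m = act r m + act r' m
  act_add_right : ∀ {X Y : Type} [Finite X] [MulAction G X] [Finite Y] [MulAction G Y]
    (r : R.val X) (m m' : val Y), act r (m + m') = act r m + act r m'
  act_star_left : ∀ {X X' Y : Type} [Finite X] [MulAction G X] [Finite X']
    [MulAction G X'] [Finite Y] [MulAction G Y] (f : X → X')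
    (hf : ∀ g x, f (g • x) = g • f x)
    (hf' : ∀ (g : G) (p : X × Y), Prod.map f id (g • p) = g • Prod.map f id p)
    (r : R.val X') (m : val Y),
    act (R.star f hf r) m = star (Prod.map f id) hf' (act r m)
  act_star_right : ∀ {X Y Y' : Type} [Finite X] [MulAction G X] [Finite Y]
    [MulAction G Y] [Finite Y'] [MulAction G Y'] (f : Y → Y')
    (hf : ∀ g y, f (g • y) = g • f y)
    (hf' : ∀ (g : G) (p : X × Y), Prod.map id f (g • p) = g • Prod.map id f p)
    (r : R.val X) (m : val Y'),
    act r (star f hf m) = star (Prod.map id f) hf' (act r m)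
  act_costar_left : ∀ {X X' Y : Type} [Finite X] [MulAction G X] [Finite X']
    [MulAction G X'] [Finite Y] [MulAction G Y] (f : X → X')
    (hf : ∀ g x, f (g • x) = g • f x)
    (hf' : ∀ (g : G) (p : X × Y), Prod.map f id (g • p) = g • Prod.map f id p)
    (r : R.val X) (m : val Y),
    act (R.costar f hf r) m = costar (Prod.map f id) hf' (act r m)
  act_costar_right : ∀ {X Y Y' : Type} [Finite X] [MulAction G X] [Finite Y]
    [MulAction G Y] [Finite Y'] [MulAction G Y'] (f : Y → Y')
    (hf : ∀ g y, f (g • y) = g • f y)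
    (hf' : ∀ (g : G) (p : X × Y), Prod.map id f (g • p) = g • Prod.map id f p)
    (r : R.val X) (m : val Y),
    act r (costar f hf m) = costar (Prod.map id f) hf' (act r m)
  act_assoc : ∀ {X Y Z : Type} [Finite X] [MulAction G X] [Finite Y] [MulAction G Y]
    [Finite Z] [MulAction G Z]
    (hα : ∀ (g : G) (p : (X × Y) × Z),
      (fun p : (X × Y) × Z => (p.1.1, (p.1.2, p.2))) (g • p) =
        g • (fun p : (X × Y) × Z => (p.1.1, (p.1.2, p.2))) p)
    (r : R.val X) (s : R.val Y) (m : val Z),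
    act (R.mul r s) m =
      star (fun p : (X × Y) × Z => (p.1.1, (p.1.2, p.2))) hα (act r (act s m))
  act_one : ∀ {X : Type} [Finite X] [MulAction G X]
    (h : ∀ (g : G) (p : PUnit × X), (g • p).2 = g • p.2) (m : val X),
    act R.one m = star (fun p : PUnit × X => p.2) h m

/-- A morphism of `R`-Mackey modules. -/
structure RModHom {G : Type} [Group G] (R : GreenFun G) (M N : RModule R)
    extends MackeyHom M.toMackeyFun N.toMackeyFun where
  linear : ∀ {X Y : Type} [Finite X] [MulAction G X] [Finite Y] [MulAction G Y]
    (r : R.val X) (m : M.val Y), app (X × Y) (M.act r m) = N.act r (app Y m)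

/-- Composition of morphisms of `R`-Mackey modules. -/
def RModHom.comp {G : Type} [Group G] {R : GreenFun G} {M N P : RModule R}
    (ψ : RModHom R N P) (φ : RModHom R M N) : RModHom R M P where
  toMackeyHom := ψ.toMackeyHom.comp φ.toMackeyHom
  linear := by
    intro X Y _ _ _ _ r m
    show ψ.app _ (φ.app _ (M.act r m)) = P.act r (ψ.app Y (φ.app Y m))
    rw [φ.linear r m, ψ.linear r (φ.app Y m)]


/-!
`M_X` is `M` precomposed with `- × X`. The self-adjunction has an explicit unit and counit
built from the projection `A × X → A` and the graph map `A × X → (A × X) × X`, `u ↦ (u, u.2)`: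
the unit `M → (M_X)_X` is restriction (`star`) along the projection followed by induction
(`costar`) along the graph map, and the counit `(N_X)_X → N` is restriction along the graph map
followed by induction along the projection. The squares relating these maps to `f × X` are
pullbacks, so the pullback axiom makes unit and counit morphisms of `R`-Mackey modules, and the
triangle identities reduce to the fact that the maps `w ↦ (w, w.2)` and `(u, x) ↦ ((u, u.2), x)`
from `(A × X) × X` to `((A × X) × X) × X` have pullback `A × X`.
-/

theorem existsUnique_prodMap {A B C W X : Type} {p : W → A} {q : W → B} {f : A → C}
    {k : B → C} (h : ∀ a b, f a = k b → ∃! w, p w = a ∧ q w = b) (a : A × X) (b : B × X)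
    (hab : Prod.map f id a = Prod.map k id b) :
    ∃! w, Prod.map p id w = a ∧ Prod.map q id w = b := by
  obtain ⟨a, x⟩ := a
  obtain ⟨b, y⟩ := b
  obtain ⟨hfk, rfl⟩ := Prod.ext_iff.mp hab
  obtain ⟨w, ⟨rfl, rfl⟩, huniq⟩ := h a b hfk
  refine ⟨(w, x), ⟨rfl, rfl⟩, ?_⟩
  rintro ⟨w', x'⟩ ⟨hp, hq⟩
  simp only [Prod.map, Prod.mk.injEq, id] at hp hq
  rw [huniq w' ⟨hp.1, hq.1⟩, hp.2]

namespace MackeyFun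

section

variable {G : Type} [Group G] (M : MackeyFun G)
  {A B C W : Type} [Finite A] [MulAction G A] [Finite B] [MulAction G B]
  [Finite C] [MulAction G C] [Finite W] [MulAction G W]

@[simp]
theorem star_star (f : A → B) (hf : ∀ (g : G) a, f (g • a) = g • f a)
    (k : B → C) (hk : ∀ (g : G) b, k (g • b) = g • k b) (v : M.val C) :
    M.star f hf (M.star k hk v) =
      M.star (fun a => k (f a)) (fun g a => by simp only [hf, hk]) v :=
  M.star_comp f hf k hk _ v

@[simp]
theorem costar_costar (f : A → B) (hf : ∀ (g : G) a, f (g • a) = g • f a)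
    (k : B → C) (hk : ∀ (g : G) b, k (g • b) = g • k b) (v : M.val A) :
    M.costar k hk (M.costar f hf v) =
      M.costar (fun a => k (f a)) (fun g a => by simp only [hf, hk]) v :=
  M.costar_comp f hf k hk _ v

@[simp]
theorem star_eq_self {f : A → A} (hf : ∀ (g : G) a, f (g • a) = g • f a) (h : ∀ a, f a = a)
    (v : M.val A) : M.star f hf v = v := by
  obtain rfl : f = id := funext h
  exact M.star_id A hf v

@[simp]
theorem costar_eq_self {f : A → A} (hf : ∀ (g : G) a, f (g • a) = g • f a) (h : ∀ a, f a = a)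
    (v : M.val A) : M.costar f hf v = v := by
  obtain rfl : f = id := funext h
  exact M.costar_id A hf v

theorem star_costar_of_lift (p : W → A) (hp : ∀ (g : G) w, p (g • w) = g • p w)
    (q : W → B) (hq : ∀ (g : G) w, q (g • w) = g • q w)
    {f : A → C} {hf : ∀ (g : G) a, f (g • a) = g • f a}
    {k : B → C} {hk : ∀ (g : G) b, k (g • b) = g • k b}
    (lift : A → B → W) (hcomm : ∀ w, f (p w) = k (q w))
    (hlift : ∀ a b, f a = k b → p (lift a b) = a ∧ q (lift a b) = b)
    (lift_eq : ∀ w, lift (p w) (q w) = w) (v : M.val A) :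
    M.star k hk (M.costar f hf v) = M.costar q hq (M.star p hp v) :=
  M.pullback p hp q hq f hf k hk hcomm (fun a b hab => ⟨lift a b, hlift a b hab,
    fun w ⟨hpw, hqw⟩ => by rw [← lift_eq w, hpw, hqw]⟩) v

theorem star_bijective_of_inverse (u : A → B) (hu : ∀ (g : G) a, u (g • a) = g • u a)
    (w : B → A) (hw : ∀ (g : G) b, w (g • b) = g • w b)
    (h₁ : ∀ a, w (u a) = a) (h₂ : ∀ b, u (w b) = b) :
    Function.Bijective (M.star u hu) :=
  Function.bijective_iff_has_inverse.mpr
    ⟨M.star w hw, fun v => by simp [h₂], fun v => by simp [h₁]⟩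

theorem costar_eq_star_of_inverse (u : A → B) (hu : ∀ (g : G) a, u (g • a) = g • u a)
    (w : B → A) (hw : ∀ (g : G) b, w (g • b) = g • w b)
    (h₁ : ∀ a, w (u a) = a) (h₂ : ∀ b, u (w b) = b) (v : M.val A) :
    M.costar u hu v = M.star w hw v := by
  have hu_inj : Function.Injective u := Function.LeftInverse.injective h₁
  -- the kernel pair of an injective map is the diagonal
  have hstar : M.star u hu (M.costar u hu v) = v := by
    rw [M.star_costar_of_lift id (fun _ _ => rfl) id (fun _ _ => rfl) (f := u) (k := u)
      (fun a _ => a) (fun _ => rfl) (fun _ _ h => ⟨rfl, hu_inj h⟩) (fun _ => rfl)]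
    simp
  calc M.costar u hu v = M.star w hw (M.star u hu (M.costar u hu v)) := by simp [h₂]
    _ = M.star w hw v := by rw [hstar]

variable (X : Type) [Finite X] [MulAction G X]

theorem star_prodMap_graph_costar_graph (v : M.val ((A × X) × X)) :
    M.star (Prod.map (fun u : A × X => (u, u.2)) id) (fun _ _ => rfl)
        (M.costar (fun w : (A × X) × X => (w, w.2)) (fun _ _ => rfl) v) =
      M.costar (fun u : A × X => (u, u.2)) (fun _ _ => rfl)
        (M.star (fun u : A × X => (u, u.2)) (fun _ _ => rfl) v) :=
  M.star_costar_of_lift (fun u : A × X => (u, u.2)) (fun _ _ => rfl)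
    (fun u : A × X => (u, u.2)) (fun _ _ => rfl) (fun _ w => w.1) (by intro; rfl) (by grind)
    (fun _ => rfl) v

theorem star_graph_costar_prodMap_graph (v : M.val ((A × X) × X)) :
    M.star (fun w : (A × X) × X => (w, w.2)) (fun _ _ => rfl)
        (M.costar (Prod.map (fun u : A × X => (u, u.2)) id) (fun _ _ => rfl) v) =
      M.costar (fun u : A × X => (u, u.2)) (fun _ _ => rfl)
        (M.star (fun u : A × X => (u, u.2)) (fun _ _ => rfl) v) :=
  M.star_costar_of_lift (fun u : A × X => (u, u.2)) (fun _ _ => rfl)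
    (fun u : A × X => (u, u.2)) (fun _ _ => rfl) (fun w _ => w.1) (by intro; rfl) (by grind)
    (fun _ => rfl) v

end

variable {G : Type} [Group G] (X : Type) [Finite X] [MulAction G X]

/-- The Dress construction `M_X(A) = M(A × X)`. It is reducible so that `(M.dress X).val A` and
`M.val (A × X)` are interchangeable when rewriting. -/
abbrev dress (M : MackeyFun G) : MackeyFun G where
  val A _ _ := M.val (A × X)
  acg A _ _ := M.acg (A × X)
  star f hf := M.star (Prod.map f id) (fun g p => Prod.ext (hf g p.1) rfl)
  costar f hf := M.costar (Prod.map f id) (fun g p => Prod.ext (hf g p.1) rfl)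
  star_id _ _ _ _ v := M.star_eq_self _ (fun _ => rfl) v
  star_comp f _ k _ _ v := M.star_comp (Prod.map f id) _ (Prod.map k id) _ _ v
  costar_id _ _ _ _ v := M.costar_eq_self _ (fun _ => rfl) v
  costar_comp f _ k _ _ v := M.costar_comp (Prod.map f id) _ (Prod.map k id) _ _ v
  additivity {A B} _ _ _ _ _ _ := by
    let e : (A × X) ⊕ (B × X) → (A ⊕ B) × X :=
      Sum.elim (fun q => (Sum.inl q.1, q.2)) (fun q => (Sum.inr q.1, q.2))
    have he : ∀ (g : G) q, e (g • q) = g • e q := by rintro g (q | q) <;> rfl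
    have he_bij : Function.Bijective (M.star e he) :=
      M.star_bijective_of_inverse e he
        (fun p => Sum.elim (fun a => Sum.inl (a, p.2)) (fun b => Sum.inr (b, p.2)) p.1)
        (by rintro g ⟨a | b, x⟩ <;> rfl) (by rintro (q | q) <;> rfl)
        (by rintro ⟨a | b, x⟩ <;> rfl)
    convert (M.additivity (X := A × X) (Y := B × X) (fun _ _ => rfl) (fun _ _ => rfl)).comp
      he_bij using 1
    funext v
    exact Prod.ext (M.star_comp Sum.inl (fun _ _ => rfl) e he (fun _ _ => rfl) v).symm
      (M.star_comp Sum.inr (fun _ _ => rfl) e he (fun _ _ => rfl) v).symm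
  pullback p hp q hq f hf k hk hcomm hpb v :=
    M.pullback (Prod.map p id) _ (Prod.map q id) _ (Prod.map f id) _ (Prod.map k id) _
      (fun w => Prod.ext (hcomm w.1) rfl) (existsUnique_prodMap hpb) v

end MackeyFun

namespace RModule

variable {G : Type} [Group G] {R : GreenFun G} (X : Type) [Finite X] [MulAction G X]

abbrev dress (M : RModule R) : RModule R where
  toMackeyFun := M.toMackeyFun.dress X
  act {A B} _ _ _ _ r m :=
    M.star (fun p : (A × B) × X => (p.1.1, (p.1.2, p.2))) (fun _ _ => rfl) (M.act r m)
  act_add_left r r' m := by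
    simp only [M.act_add_left, map_add]
  act_add_right r m m' := by
    simp only [M.act_add_right, map_add]
  act_star_left f hf _ r m := by
    simp [M.act_star_left f hf (fun g p => Prod.ext (hf g p.1) rfl)]
  act_star_right f hf _ r m := by
    simp [M.act_star_right (Prod.map f id : _ × X → _ × X) (fun g q => Prod.ext (hf g q.1) rfl)
      (fun g p => Prod.ext rfl (Prod.ext (hf g p.2.1) rfl))]
  act_costar_left {A A' B} _ _ _ _ _ _ f hf _ r m := by
    rw [M.act_costar_left f hf (fun g p => Prod.ext (hf g p.1) rfl) r m]
    exact M.star_costar_of_lift (fun p : (A × B) × X => (p.1.1, (p.1.2, p.2))) (fun _ _ => rfl)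
      (Prod.map (Prod.map f id) id) (fun g p => Prod.ext (Prod.ext (hf g p.1.1) rfl) rfl)
      (fun a _ => ((a.1, a.2.1), a.2.2)) (fun _ => rfl) (by grind) (fun _ => rfl) (M.act r m)
  act_costar_right {A B B'} _ _ _ _ _ _ f hf _ r m := by
    rw [M.act_costar_right (Prod.map f id : B × X → B' × X) (fun g q => Prod.ext (hf g q.1) rfl)
      (fun g p => Prod.ext rfl (Prod.ext (hf g p.2.1) rfl)) r m]
    exact M.star_costar_of_lift (fun p : (A × B) × X => (p.1.1, (p.1.2, p.2))) (fun _ _ => rfl)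
      (Prod.map (Prod.map id f) id) (fun g p => Prod.ext (Prod.ext rfl (hf g p.1.2)) rfl)
      (fun a _ => ((a.1, a.2.1), a.2.2)) (fun _ => rfl) (by grind) (fun _ => rfl) (M.act r m)
  act_assoc _ r s m := by
    simp [M.act_assoc (fun _ _ => rfl), M.act_star_right]
  act_one _ m := by
    simp [M.act_one (fun _ _ => rfl), Prod.map_def]

end RModule

namespace RModHom

variable {G : Type} [Group G] {R : GreenFun G} {M N P Q : RModule R}

@[ext]
theorem ext {φ ψ : RModHom R M N}
    (h : ∀ (A : Type) [Finite A] [MulAction G A] (v : M.val A), φ.app A v = ψ.app A v) :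
    φ = ψ := by
  obtain ⟨⟨φ, _, _⟩, _⟩ := φ
  obtain ⟨⟨ψ, _, _⟩, _⟩ := ψ
  obtain rfl : @φ = @ψ := by
    funext A _ _
    exact AddMonoidHom.ext (h A)
  rfl

protected def id (M : RModule R) : RModHom R M M where
  app _ _ _ := AddMonoidHom.id _
  nat_star _ _ _ := rfl
  nat_costar _ _ _ := rfl
  linear _ _ := rfl

@[simp]
theorem comp_app (φ : RModHom R M N) (ψ : RModHom R N P) (A : Type) [Finite A] [MulAction G A]
    (v : M.val A) : (ψ.comp φ).app A v = ψ.app A (φ.app A v) := rfl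

theorem comp_id (φ : RModHom R M N) : φ.comp (RModHom.id M) = φ := rfl

theorem id_comp (φ : RModHom R M N) : (RModHom.id N).comp φ = φ := rfl

theorem comp_assoc (φ : RModHom R M N) (ψ : RModHom R N P) (χ : RModHom R P Q) :
    (χ.comp ψ).comp φ = χ.comp (ψ.comp φ) := rfl

variable (X : Type) [Finite X] [MulAction G X]

def dress (φ : RModHom R M N) : RModHom R (M.dress X) (N.dress X) where
  app A _ _ := φ.app (A × X)
  nat_star f _ v := φ.nat_star (Prod.map f id) _ v
  nat_costar f _ v := φ.nat_costar (Prod.map f id) _ v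
  linear r m := by
    simp only [RModule.dress]
    rw [φ.nat_star, φ.linear]

theorem dress_comp (φ : RModHom R M N) (ψ : RModHom R N P) :
    (ψ.comp φ).dress X = (ψ.dress X).comp (φ.dress X) := rfl

end RModHom

namespace RModule

variable {G : Type} [Group G] {R : GreenFun G} (X : Type) [Finite X] [MulAction G X]

def starFst (M : RModule R) : RModHom R M (M.dress X) where
  app A _ _ := M.star (Prod.fst : A × X → A) (fun _ _ => rfl)
  nat_star f hf v := by simp [Prod.map_def]
  nat_costar {A B} _ _ _ _ f hf v :=
    M.star_costar_of_lift (Prod.fst : A × X → A) (fun _ _ => rfl) (Prod.map f id)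
      (fun g p => Prod.ext (hf g p.1) rfl) (fun a b => (a, b.2)) (fun _ => rfl) (by grind)
      (fun _ => rfl) v
  linear r m := by simp [M.act_star_right]

def costarGraph (M : RModule R) : RModHom R (M.dress X) ((M.dress X).dress X) where
  app A _ _ := M.costar (fun u : A × X => (u, u.2)) (fun _ _ => rfl)
  nat_star {A B} _ _ _ _ f hf v :=
    Eq.symm (M.star_costar_of_lift (Prod.map f id : A × X → B × X)
      (fun g p => Prod.ext (hf g p.1) rfl) (fun u : A × X => (u, u.2)) (fun _ _ => rfl)
      (fun _ b => b.1) (fun _ => rfl) (by grind) (fun _ => rfl) v)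
  nat_costar f hf v := by simp [Prod.map_def]
  linear {A B} _ _ _ _ r m := by
    simp only [dress, M.act_costar_right (fun u : B × X => (u, u.2)) (fun _ _ => rfl)
      (fun _ _ => rfl), MackeyFun.star_star]
    exact Eq.symm (M.star_costar_of_lift (fun p : (A × B) × X => (p.1.1, (p.1.2, p.2)))
      (fun _ _ => rfl) (fun u : (A × B) × X => (u, u.2)) (fun _ _ => rfl) (fun _ b => b.1)
      (fun _ => rfl) (by grind) (fun _ => rfl) (M.act r m))

def starGraph (N : RModule R) : RModHom R ((N.dress X).dress X) (N.dress X) where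
  app A _ _ := N.star (fun u : A × X => (u, u.2)) (fun _ _ => rfl)
  nat_star f hf v := by simp [Prod.map_def]
  nat_costar {A B} _ _ _ _ f hf v :=
    N.star_costar_of_lift (fun u : A × X => (u, u.2)) (fun _ _ => rfl)
      (Prod.map f id : A × X → B × X) (fun g p => Prod.ext (hf g p.1) rfl) (fun a _ => a.1)
      (fun _ => rfl) (by grind) (fun _ => rfl) v
  linear {A B} _ _ _ _ r m := by
    simp [N.act_star_right (fun u : B × X => (u, u.2)) (fun _ _ => rfl) (fun _ _ => rfl)]

def costarFst (N : RModule R) : RModHom R (N.dress X) N where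
  app A _ _ := N.costar (Prod.fst : A × X → A) (fun _ _ => rfl)
  nat_star {A B} _ _ _ _ f hf v :=
    Eq.symm (N.star_costar_of_lift (Prod.map f id : A × X → B × X)
      (fun g p => Prod.ext (hf g p.1) rfl) Prod.fst (fun _ _ => rfl) (fun b a => (a, b.2))
      (fun _ => rfl) (by grind) (fun _ => rfl) v)
  nat_costar f hf v := by simp [Prod.map_def]
  linear {A B} _ _ _ _ r m := by
    dsimp only [dress]
    rw [N.act_costar_right Prod.fst (fun _ _ => rfl) (fun _ _ => rfl),
      ← N.costar_eq_star_of_inverse (fun u : A × (B × X) => ((u.1, u.2.1), u.2.2))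
        (fun _ _ => rfl) _ _ (fun _ => rfl) (fun _ => rfl)]
    simp [Prod.map_def]

def dressUnit (M : RModule R) : RModHom R M ((M.dress X).dress X) :=
  (costarGraph X M).comp (starFst X M)

def dressCounit (N : RModule R) : RModHom R ((N.dress X).dress X) N :=
  (costarFst X N).comp (starGraph X N)

theorem dressUnit_comp {M M' : RModule R} (φ : RModHom R M' M) :
    (dressUnit X M).comp φ = ((φ.dress X).dress X).comp (dressUnit X M') := by
  ext A _ _ v
  exact ((φ.nat_costar _ _ _).trans (congrArg _ (φ.nat_star _ _ v))).symm

theorem dressCounit_comp {M N : RModule R} (θ : RModHom R M N) :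
    (dressCounit X N).comp ((θ.dress X).dress X) = θ.comp (dressCounit X M) := by
  ext A _ _ v
  exact ((θ.nat_costar _ _ _).trans (congrArg _ (θ.nat_star _ _ v))).symm

theorem dressCounit_comp_dress_dressUnit (M : RModule R) :
    (dressCounit X (M.dress X)).comp ((dressUnit X M).dress X) = RModHom.id _ := by
  ext A _ _ v
  simp [dressCounit, dressUnit, starFst, costarGraph, starGraph, costarFst, RModHom.dress,
    RModHom.id, M.star_prodMap_graph_costar_graph]

theorem dress_dressCounit_comp_dressUnit (N : RModule R) :
    ((dressCounit X N).dress X).comp (dressUnit X (N.dress X)) = RModHom.id _ := by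
  ext A _ _ v
  simp [dressCounit, dressUnit, starFst, costarGraph, starGraph, costarFst, RModHom.dress,
    RModHom.id, N.star_graph_costar_prodMap_graph]

@[simps]
def dressAdjunction (M N : RModule R) :
    RModHom R (M.dress X) N ≃ RModHom R M (N.dress X) where
  toFun θ := (θ.dress X).comp (dressUnit X M)
  invFun φ := (dressCounit X N).comp (φ.dress X)
  left_inv θ := by
    dsimp only
    rw [RModHom.dress_comp, ← RModHom.comp_assoc, dressCounit_comp, RModHom.comp_assoc,
      dressCounit_comp_dress_dressUnit, RModHom.comp_id]
  right_inv φ := by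
    dsimp only
    rw [RModHom.dress_comp, RModHom.comp_assoc, ← dressUnit_comp, ← RModHom.comp_assoc,
      dress_dressCounit_comp_dressUnit, RModHom.id_comp]

theorem dressAdjunction_naturality_right {M N N' : RModule R} (ψ : RModHom R N N')
    (θ : RModHom R (M.dress X) N) :
    dressAdjunction X M N' (ψ.comp θ) = (ψ.dress X).comp (dressAdjunction X M N θ) :=
  rfl

theorem dressAdjunction_naturality_left {M M' N : RModule R} (φ : RModHom R M' M)
    (θ : RModHom R (M.dress X) N) :
    dressAdjunction X M' N (θ.comp (φ.dress X)) = (dressAdjunction X M N θ).comp φ := by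
  rw [dressAdjunction_apply, dressAdjunction_apply, RModHom.dress_comp, RModHom.comp_assoc,
    ← dressUnit_comp, RModHom.comp_assoc]

end RModule

theorem stmt15_general {G : Type} [Group G] (R : GreenFun G)
    (X : Type) [Finite X] [MulAction G X] :
    ∃ (MX : RModule R → RModule R)
      (MXMap : ∀ {M N : RModule R}, RModHom R M N → RModHom R (MX M) (MX N))
      (hval : ∀ (M : RModule R) (Y : Type) [Finite Y] [MulAction G Y],
        (MX M).val Y = M.val (Y × X)),
      -- the hom action of `M ↦ M_X` is the evident one
      (∀ (M N : RModule R) (φ : RModHom R M N) (Y : Type) [Finite Y]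
        [MulAction G Y] (v : (MX M).val Y),
        (MXMap φ).app Y v =
          cast (hval N Y).symm (φ.app (Y × X) (cast (hval M Y) v))) ∧
      -- the self-adjunction `R-Mac(M_X, N) ≃ R-Mac(M, N_X)`, natural in `M` and `N`
      (∃ adj : ∀ M N : RModule R, RModHom R (MX M) N ≃ RModHom R M (MX N),
        (∀ (M N N' : RModule R) (ψ : RModHom R N N') (θ : RModHom R (MX M) N),
          adj M N' (ψ.comp θ) = (MXMap ψ).comp (adj M N θ)) ∧
        (∀ (M M' N : RModule R) (φ : RModHom R M' M) (θ : RModHom R (MX M) N),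
          adj M' N (θ.comp (MXMap φ)) = (adj M N θ).comp φ)) :=
  ⟨RModule.dress X, RModHom.dress X, fun _ _ _ _ => rfl, fun _ _ _ _ _ _ _ => rfl,
    RModule.dressAdjunction X, fun _ _ _ => RModule.dressAdjunction_naturality_right X,
    fun _ _ _ => RModule.dressAdjunction_naturality_left X⟩

/-- Let `G` be a finite group, `R` a commutative Green functor for
`G`, and `X` a finite `G`-set.  The functor `M ↦ M_X` on `R`-Mackey modules, where
`M_X(Y) = M(Y × X)`, is its own left and right adjoint: there are bijections
`R-Mac(M_X, N) ≅ R-Mac(M, N_X)`, natural in `M` and `N`. -/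
theorem stmt15 {G : Type} [Group G] [Finite G] (R : GreenFun G)
    (X : Type) [Finite X] [MulAction G X] :
    ∃ (MX : RModule R → RModule R)
      (MXMap : ∀ {M N : RModule R}, RModHom R M N → RModHom R (MX M) (MX N))
      (hval : ∀ (M : RModule R) (Y : Type) [Finite Y] [MulAction G Y],
        (MX M).val Y = M.val (Y × X)),
      -- the hom action of `M ↦ M_X` is the evident one
      (∀ (M N : RModule R) (φ : RModHom R M N) (Y : Type) [Finite Y]
        [MulAction G Y] (v : (MX M).val Y),
        (MXMap φ).app Y v =
          cast (hval N Y).symm (φ.app (Y × X) (cast (hval M Y) v))) ∧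
      -- the self-adjunction `R-Mac(M_X, N) ≃ R-Mac(M, N_X)`, natural in `M` and `N`
      (∃ adj : ∀ M N : RModule R, RModHom R (MX M) N ≃ RModHom R M (MX N),
        (∀ (M N N' : RModule R) (ψ : RModHom R N N') (θ : RModHom R (MX M) N),
          adj M N' (ψ.comp θ) = (MXMap ψ).comp (adj M N θ)) ∧
        (∀ (M M' N : RModule R) (φ : RModHom R M' M) (θ : RModHom R (MX M) N),
          adj M' N (θ.comp (MXMap φ)) = (adj M N θ).comp φ)) :=
  stmt15_general R X
end
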